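/- Let N ≥ 2, let p ∈ ℤ, and let Y ⊆ [0,1] be a Borel set with λ(Y) > 0. Then for Lebesgue-almost every x ∈ Y there exist T ∈ F(N) and y ∈ Y such that T(x) = y, T is differentiable at x, and T'(x) = N^{−p}. That is, the set of x ∈ Y for which no such T and y exist has Lebesgue measure zero. -/

import Mathlib

/-! Write `c = N ^ (-p)` and `h_a` for the homothety with centre `a` and ratio `c`. For an
`N`-adic `a` slightly to the left of `x ∈ (0, 1)`, the element of `F(N)` that is the identity
outside `[a, a + L + cL]`, has slope `c` on `[a, a + L]` and slope `c⁻¹` on `[a + L, a + L + cL]`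
(for a suitable `N`-adic `L`) sends `x` to `h_a x` with derivative `c`. So every bad point `x`
has a `q > 0` with `h_a x ∉ Y` for all `N`-adic `a ∈ (x - q, x)`, and it suffices that the set
`S` of such points (for fixed `q`) is null. At a density point `x₀` of `S`, take an `N`-adic `a`
just left of `x₀`, `I = [a, a + 2r]` and `J = h_a I`: both contain `x₀`, and `h_a` maps `S ∩ I`
into `J \ Y`, so the densities of `S` in `I` and in `J` add up to at most `1`, whereas both tend
to `1` as `r → 0`. -/

/-- A real number is an `N`-adic rational if it equals `k / N^m` for some `k : ℤ`, `m : ℕ`. -/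
def IsNAdic (N : ℕ) (x : ℝ) : Prop :=
  ∃ (k : ℤ) (m : ℕ), x = (k : ℝ) / (N : ℝ) ^ m

/-- Membership (as a map of `[0,1]`) in the generalized Thompson group `F(N)`:
`f 0 = 0`, `f 1 = 1`, and there is a finite partition `0 = a 0 < a 1 < ⋯ < a n = 1`
of `[0,1]` by `N`-adic rationals such that on each piece `[a i, a (i+1)]` the map `f`
is affine with slope an integer power of `N`.  (Such an `f` is automatically an
increasing piecewise-linear homeomorphism of `[0,1]` onto itself, with all
non-differentiability points `N`-adic.) -/
def InFN (N : ℕ) (f : ℝ → ℝ) : Prop :=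
  f 0 = 0 ∧ f 1 = 1 ∧
    ∃ (n : ℕ) (a : ℕ → ℝ), 0 < n ∧ a 0 = 0 ∧ a n = 1 ∧
      (∀ i < n, a i < a (i + 1)) ∧
      (∀ i ≤ n, IsNAdic N (a i)) ∧
      (∀ i < n, ∃ q : ℤ, ∀ x ∈ Set.Icc (a i) (a (i + 1)),
        f x = f (a i) + (N : ℝ) ^ q * (x - a i))

open MeasureTheory
open Set Filter Topology Metric

theorem IsNAdic.add {N : ℕ} (hN : N ≠ 0) {x y : ℝ} (hx : IsNAdic N x) (hy : IsNAdic N y) :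
    IsNAdic N (x + y) := by
  obtain ⟨k, m, rfl⟩ := hx
  obtain ⟨k', m', rfl⟩ := hy
  refine ⟨k * N ^ m' + k' * N ^ m, m + m', ?_⟩
  field_simp
  push_cast
  ring

theorem IsNAdic.zpow_mul {N : ℕ} (z : ℤ) {x : ℝ} (hx : IsNAdic N x) :
    IsNAdic N ((N : ℝ) ^ z * x) := by
  obtain ⟨k, m, rfl⟩ := hx
  obtain ⟨n, rfl | rfl⟩ := Int.eq_nat_or_neg z
  · exact ⟨k * N ^ n, m, by push_cast; rw [zpow_natCast]; ring⟩
  · exact ⟨k, m + n, by rw [zpow_neg, zpow_natCast, pow_add]; ring⟩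

theorem dense_setOf_isNAdic {N : ℕ} (hN : 1 < N) : Dense {x : ℝ | IsNAdic N x} := by
  refine dense_of_exists_between fun u v huv => ?_
  obtain ⟨m, hm⟩ := pow_unbounded_of_one_lt (v - u)⁻¹ (Nat.one_lt_cast.2 hN)
  have hNm : (0 : ℝ) < (N : ℝ) ^ m := by positivity
  have hstep : ((N : ℝ) ^ m)⁻¹ < v - u := inv_lt_of_inv_lt₀ (by linarith) hm
  refine ⟨(⌊u * (N : ℝ) ^ m⌋ + 1 : ℤ) / (N : ℝ) ^ m, ⟨_, m, rfl⟩, ?_, ?_⟩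
  · rw [lt_div_iff₀ hNm]
    push_cast
    exact Int.lt_floor_add_one _
  · rw [div_lt_iff₀ hNm]
    have := Int.floor_le (u * (N : ℝ) ^ m)
    have := mul_lt_mul_of_pos_right hstep hNm
    rw [inv_mul_cancel₀ hNm.ne'] at this
    push_cast
    linarith

noncomputable def thompsonBump (c A L : ℝ) (u : ℝ) : ℝ :=
  if u ≤ A then u
  else if u ≤ A + L then A + c * (u - A)
  else if u ≤ A + L + c * L then A + c * L + c⁻¹ * (u - (A + L))
  else u

section thompsonBump

variable {c A L u : ℝ}

theorem thompsonBump_of_le (hu : u ≤ A) : thompsonBump c A L u = u := if_pos hu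

theorem thompsonBump_of_mem_Icc_left (hu : u ∈ Icc A (A + L)) :
    thompsonBump c A L u = A + c * (u - A) := by
  rcases hu.1.eq_or_lt with rfl | hAu
  · simp [thompsonBump]
  · simp only [thompsonBump, if_neg hAu.not_ge, if_pos hu.2]

theorem thompsonBump_of_mem_Icc_right (hL : 0 < L)
    (hu : u ∈ Icc (A + L) (A + L + c * L)) :
    thompsonBump c A L u = A + c * L + c⁻¹ * (u - (A + L)) := by
  rcases hu.1.eq_or_lt with rfl | hALu
  · simp [thompsonBump, hL.not_ge]
  · simp only [thompsonBump, if_neg (show ¬u ≤ A by linarith), if_neg hALu.not_ge, if_pos hu.2]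

theorem thompsonBump_of_ge (hc : 0 < c) (hL : 0 < L) (hu : A + L + c * L ≤ u) :
    thompsonBump c A L u = u := by
  rcases hu.eq_or_lt with rfl | hu
  · rw [thompsonBump_of_mem_Icc_right hL ⟨by nlinarith, le_rfl⟩]
    field_simp
    ring
  · simp only [thompsonBump, if_neg (show ¬u ≤ A by nlinarith),
      if_neg (show ¬u ≤ A + L by nlinarith), if_neg hu.not_ge]

theorem hasDerivAt_thompsonBump {x : ℝ} (hx : x ∈ Ioo A (A + L)) :
    HasDerivAt (thompsonBump c A L) c x := by
  have haff : HasDerivAt (fun u => A + c * (u - A)) c x := by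
    simpa using (((hasDerivAt_id x).sub_const A).const_mul c).const_add A
  exact haff.congr_of_eventuallyEq <| eventually_of_mem (Ioo_mem_nhds hx.1 hx.2)
    fun u hu => thompsonBump_of_mem_Icc_left (Ioo_subset_Icc_self hu)

theorem inFN_thompsonBump {N : ℕ} (hN : N ≠ 0) (p : ℤ) (hA : IsNAdic N A)
    (hL : IsNAdic N L) (hA₀ : 0 < A) (hL₀ : 0 < L) (h₁ : A + L + (N : ℝ) ^ (-p) * L < 1) :
    InFN N (thompsonBump ((N : ℝ) ^ (-p)) A L) := by
  set c : ℝ := (N : ℝ) ^ (-p) with hc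
  have hc₀ : 0 < c := zpow_pos (Nat.cast_pos.2 (Nat.pos_of_ne_zero hN)) _
  have hcL : 0 < c * L := mul_pos hc₀ hL₀
  refine ⟨thompsonBump_of_le hA₀.le, thompsonBump_of_ge hc₀ hL₀ h₁.le,
    4, fun i => [0, A, A + L, A + L + c * L, 1].getD i 0, by norm_num, rfl, rfl,
    fun i hi => ?_, fun i hi => ?_, fun i hi => ?_⟩
  · interval_cases i <;> simp <;> linarith
  · interval_cases i
    exacts [⟨0, 0, by simp⟩, hA, hA.add hN hL, (hA.add hN hL).add hN (hL.zpow_mul (-p)),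
      ⟨1, 0, by simp⟩]
  · interval_cases i <;> simp only [List.getD_cons_zero, List.getD_cons_succ]
    · exact ⟨0, fun u hu => by
        rw [thompsonBump_of_le hu.2, thompsonBump_of_le hA₀.le]; simp⟩
    · exact ⟨-p, fun u hu => by
        rw [thompsonBump_of_mem_Icc_left hu, thompsonBump_of_mem_Icc_left ⟨le_rfl, by linarith⟩]
        ring⟩
    · refine ⟨p, fun u hu => ?_⟩
      rw [thompsonBump_of_mem_Icc_right hL₀ hu,
        thompsonBump_of_mem_Icc_right hL₀ ⟨le_rfl, by linarith⟩, hc, zpow_neg, inv_inv]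
      ring
    · exact ⟨0, fun u hu => by
        rw [thompsonBump_of_ge hc₀ hL₀ hu.1, thompsonBump_of_ge hc₀ hL₀ le_rfl]; simp⟩

end thompsonBump

theorem measure_inter_div_add_measure_inter_div_le_one {c r a : ℝ} (hc : 0 < c) (hr : 0 < r)
    {S Y : Set ℝ} (hY : MeasurableSet Y) (hSY : S ⊆ Y)
    (h : ∀ x ∈ S, a < x → x ≤ a + 2 * r → AffineMap.homothety a c x ∉ Y) :
    volume (S ∩ closedBall (a + r) r) / volume (closedBall (a + r) r)
      + volume (S ∩ closedBall (a + c * r) (c * r)) / volume (closedBall (a + c * r) (c * r))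
      ≤ 1 := by
  set I := closedBall (a + r) r with hI
  set J := closedBall (a + c * r) (c * r) with hJ
  have hc₀ : ENNReal.ofReal c ≠ 0 := ENNReal.ofReal_ne_zero_iff.2 hc
  have hvolJ : volume J = ENNReal.ofReal c * volume I := by
    rw [Real.volume_closedBall, Real.volume_closedBall, ← ENNReal.ofReal_mul hc.le]
    ring_nf
  have himage : AffineMap.homothety a c '' ((S ∩ I) \ {a}) ⊆ J \ Y := by
    rintro _ ⟨x, ⟨⟨hxS, hxI⟩, hxa⟩, rfl⟩
    rw [hI, Real.closedBall_eq_Icc] at hxI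
    have hax : a < x := lt_of_le_of_ne (by linarith [hxI.1]) (Ne.symm hxa)
    refine ⟨?_, h x hxS hax (by linarith [hxI.2])⟩
    rw [hJ, Real.closedBall_eq_Icc, AffineMap.homothety_apply]
    simp only [vsub_eq_sub, vadd_eq_add, smul_eq_mul, mem_Icc]
    constructor <;> nlinarith [hxI.2]
  have hSI : volume (S ∩ I) / volume I ≤ volume (J \ Y) / volume J := by
    rw [← ENNReal.mul_div_mul_left _ _ hc₀ ENNReal.ofReal_ne_top, ← hvolJ]
    gcongr
    calc ENNReal.ofReal c * volume (S ∩ I)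
        = volume (AffineMap.homothety a c '' ((S ∩ I) \ {a})) := by
          rw [Measure.addHaar_image_homothety, measure_sdiff_null (measure_singleton a),
            Module.finrank_self, pow_one, abs_of_pos hc]
      _ ≤ volume (J \ Y) := measure_mono himage
  have hSJ : volume (S ∩ J) / volume J ≤ volume (J ∩ Y) / volume J := by
    gcongr ?_ / _
    exact measure_mono fun x hx => ⟨hx.2, hSY hx.1⟩
  calc volume (S ∩ I) / volume I + volume (S ∩ J) / volume J
      ≤ volume (J \ Y) / volume J + volume (J ∩ Y) / volume J := add_le_add hSI hSJ
    _ = 1 := by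
        rw [ENNReal.div_add_div_same, add_comm, measure_inter_add_sdiff _ hY,
          ENNReal.div_self (by simp [hc, hr]) measure_closedBall_lt_top.ne]

theorem volume_eq_zero_of_forall_homothety_notMem {D : Set ℝ} (hD : Dense D) {c q : ℝ}
    (hc : 0 < c) (hq : 0 < q) {S Y : Set ℝ} (hY : MeasurableSet Y) (hSY : S ⊆ Y)
    (h : ∀ x ∈ S, ∀ a ∈ D, x - q < a → a < x → AffineMap.homothety a c x ∉ Y) :
    volume S = 0 := by
  by_contra hS
  have : (ae (volume.restrict S)).NeBot := ae_neBot.2 (by simpa using hS)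
  obtain ⟨x₀, hx₀⟩ := (IsUnifLocDoublingMeasure.ae_tendsto_measure_inter_div volume S 1).exists
  have hmin : ∀ r : ℝ, 0 < r → ∃ a ∈ D, x₀ - min 1 c * r < a ∧ a < x₀ := fun r hr =>
    hD.exists_between (sub_lt_self _ (mul_pos (lt_min one_pos hc) hr))
  choose! a haD ha using hmin
  have hcr : Tendsto (fun r => c * r) (𝓝[>] 0) (𝓝[>] 0) :=
    tendsto_nhdsWithin_of_tendsto_nhds_of_eventually_within _
      (by simpa using ((continuous_const_mul c).tendsto 0).mono_left nhdsWithin_le_nhds)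
      (eventually_nhdsWithin_of_forall fun r hr => mul_pos hc hr)
  have hsmall : ∀ᶠ r in 𝓝[>] (0 : ℝ), r ∈ Ioo 0 (q / 2) := Ioo_mem_nhdsGT (half_pos hq)
  have hI := hx₀ (fun r => a r + r) id tendsto_id (hsmall.mono fun r hr => by
    have := mul_le_mul_of_nonneg_right (min_le_left 1 c) hr.1.le
    simp only [id, one_mul, Real.closedBall_eq_Icc, mem_Icc]
    constructor <;> linarith [ha r hr.1])
  have hJ := hx₀ (fun r => a r + c * r) (fun r => c * r) hcr (hsmall.mono fun r hr => by
    have := mul_le_mul_of_nonneg_right (min_le_right 1 c) hr.1.le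
    simp only [one_mul, Real.closedBall_eq_Icc, mem_Icc]
    constructor <;> linarith [ha r hr.1])
  have htwo_le_one := le_of_tendsto (hI.add hJ) (hsmall.mono fun r hr =>
    measure_inter_div_add_measure_inter_div_le_one hc hr.1 hY hSY fun x hxS hax hxr =>
      h x hxS (a r) (haD r hr.1) (by linarith [hr.2]) hax)
  norm_num at htwo_le_one

theorem exists_inFN_hasDerivAt_eq_homothety {N : ℕ} (hN : 1 < N) (p : ℤ) {a x : ℝ}
    (ha : IsNAdic N a) (ha₀ : 0 < a) (hax : a < x) (hx : (N : ℝ) ^ (-p) * (x - a) < 1 - x) :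
    ∃ T : ℝ → ℝ, InFN N T ∧ HasDerivAt T ((N : ℝ) ^ (-p)) x ∧
      T x = AffineMap.homothety a ((N : ℝ) ^ (-p)) x := by
  set c : ℝ := (N : ℝ) ^ (-p)
  have hc : 0 < c := zpow_pos (by positivity) _
  obtain ⟨L, hL, hxL, hL₁⟩ := (dense_setOf_isNAdic hN).exists_between
    (show x - a < (1 - a) / (1 + c) by rw [lt_div_iff₀ (by positivity)]; linarith)
  rw [lt_div_iff₀ (by positivity)] at hL₁
  refine ⟨thompsonBump c a L, inFN_thompsonBump (by omega) p ha hL ha₀ (by linarith)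
    (by linarith), hasDerivAt_thompsonBump ⟨hax, by linarith⟩, ?_⟩
  rw [thompsonBump_of_mem_Icc_left ⟨hax.le, by linarith⟩, AffineMap.homothety_apply]
  simp only [vsub_eq_sub, vadd_eq_add, smul_eq_mul]
  ring

theorem statement15_general (N : ℕ) (hN : 2 ≤ N) (p : ℤ)
    (Y : Set ℝ) (hY : Y ⊆ Set.Icc (0 : ℝ) 1) (hYmeas : MeasurableSet Y) :
    volume { x ∈ Y | ¬ ∃ T : ℝ → ℝ, InFN N T ∧
      HasDerivAt T ((N : ℝ) ^ (-p)) x ∧ T x ∈ Y } = 0 := by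
  set c : ℝ := (N : ℝ) ^ (-p)
  have hc : 0 < c := zpow_pos (by positivity) _
  refine measure_mono_null (t := {0, 1} ∪ ⋃ n : ℕ, {x ∈ Y | ∀ a ∈ {a | IsNAdic N a},
    x - 1 / (n + 1) < a → a < x → AffineMap.homothety a c x ∉ Y}) ?_ ?_
  · rintro x ⟨hxY, hbad⟩
    by_cases hx : x = 0 ∨ x = 1
    · exact Or.inl hx
    have hx₀ : 0 < x := (hY hxY).1.lt_of_ne (Ne.symm fun h => hx (Or.inl h))
    have hx₁ : x < 1 := (hY hxY).2.lt_of_ne fun h => hx (Or.inr h)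
    obtain ⟨n, hn⟩ := exists_nat_one_div_lt (lt_min hx₀ (div_pos (sub_pos.2 hx₁) hc))
    refine Or.inr (mem_iUnion.2 ⟨n, hxY, fun a ha hxa hax hy => hbad ?_⟩)
    have hxa' := hxa.trans' (sub_lt_sub_left hn x)
    obtain ⟨T, hT, hTx, hTy⟩ := exists_inFN_hasDerivAt_eq_homothety (by omega) p ha
      (by linarith [min_le_left x ((1 - x) / c)]) hax
      ((lt_div_iff₀' hc).1 (by linarith [min_le_right x ((1 - x) / c)]))
    exact ⟨T, hT, hTx, hTy ▸ hy⟩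
  · refine measure_union_null ((toFinite _).measure_zero _) (measure_iUnion_null fun n => ?_)
    exact volume_eq_zero_of_forall_homothety_notMem (dense_setOf_isNAdic (by omega)) hc
      Nat.one_div_pos_of_nat hYmeas (sep_subset _ _) fun x hx => hx.2

/-- For `p ∈ ℤ` and a Borel set `Y ⊆ [0,1]` of positive Lebesgue
measure, for almost every `x ∈ Y` there are `T ∈ F(N)` and `y ∈ Y` with `T(x) = y`,
`T` differentiable at `x` and `T'(x) = N^(−p)`: the set of points of `Y` admitting no
such `T`, `y` is Lebesgue-null. -/
theorem statement15 (N : ℕ) (hN : 2 ≤ N) (p : ℤ)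
    (Y : Set ℝ) (hY : Y ⊆ Set.Icc (0 : ℝ) 1) (hYmeas : MeasurableSet Y)
    (hYpos : 0 < volume Y) :
    volume { x ∈ Y | ¬ ∃ T : ℝ → ℝ, InFN N T ∧
      HasDerivAt T ((N : ℝ) ^ (-p)) x ∧ T x ∈ Y } = 0 :=
  statement15_general N hN p Y hY hYmeas
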